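/- arXiv:math/0407440 — 2 statements merged into one kernel-verified Lean document; each statement's English description precedes it below -/
import Mathlib

section
/- Suppose H is an ideal on P_κ(λ) with a_H = κ. Then there is an ideal K on P_κ(λ) such that K is not a weak π-point, cof(K) ≤ cof(H), and cof̄(K) ≤ cof̄(H). -/
open Cardinal Set

namespace PaperFormal

noncomputable section

/-- The least (small) cardinality of a family `F : Set X` satisfying `P`. -/
def leastCard {X : Type 1} (P : Set X → Prop) : Cardinal.{0} :=
  sInf {c : Cardinal.{0} | ∃ F : Set X, P F ∧ Cardinal.lift.{1} c = #F}

/-- The collection of (codings of) functions from `κ` to `κ`. -/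
def funOn (κ : Cardinal.{0}) : Set (Ordinal.{0} → Ordinal.{0}) :=
  {f | ∀ α < κ.ord, f α < κ.ord}

/-- The unequality number `U_κ`. -/
def uneq (κ : Cardinal.{0}) : Cardinal.{0} :=
  leastCard fun F : Set (Ordinal.{0} → Ordinal.{0}) => F ⊆ funOn κ ∧
    ∀ g ∈ funOn κ, ∃ f ∈ F, {α | α < κ.ord ∧ f α = g α} = ∅

/-- The dominating number `d_κ`. -/
def domNum (κ : Cardinal.{0}) : Cardinal.{0} :=
  leastCard fun F : Set (Ordinal.{0} → Ordinal.{0}) => F ⊆ funOn κ ∧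
    ∀ g ∈ funOn κ, ∃ f ∈ F, ∀ α < κ.ord, g α < f α

/-- The number `d̄_κ`. -/
def domBar (κ : Cardinal.{0}) : Cardinal.{0} :=
  leastCard fun X : Set (Ordinal.{0} → Ordinal.{0}) => X ⊆ funOn κ ∧
    ∀ g ∈ funOn κ, ∃ x ⊆ X, x.Nonempty ∧ #x < Cardinal.lift.{1} κ ∧
      ∀ α < κ.ord, g α < sSup {o | ∃ f ∈ x, f α = o}

/-- The generalized Cantor space `^ρ2`, with points coded as subsets of `Iio ρ.ord`. -/
def cantor (ρ : Cardinal.{0}) : Set (Set Ordinal.{0}) := {x | x ⊆ Iio ρ.ord}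

/-- A forcing condition: a pair `(a, t)` with `t ⊆ a ⊆ Iio ρ.ord` and `|a| < ν`. -/
def IsCond (ν ρ : Cardinal.{0}) (a t : Set Ordinal.{0}) : Prop :=
  a ⊆ Iio ρ.ord ∧ t ⊆ a ∧ #a < Cardinal.lift.{1} ν

/-- The basic open set determined by a condition. -/
def basicOpen (ρ : Cardinal.{0}) (a t : Set Ordinal.{0}) : Set (Set Ordinal.{0}) :=
  {x | x ⊆ Iio ρ.ord ∧ x ∩ a = t}

/-- Dense open subsets of `^ρ2` (for the `<ν`-support topology). -/
def DenseOpen (ν ρ : Cardinal.{0}) (D : Set (Set Ordinal.{0})) : Prop :=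
  D ⊆ cantor ρ ∧
  (∀ x ∈ D, ∃ a t, IsCond ν ρ a t ∧ x ∈ basicOpen ρ a t ∧ basicOpen ρ a t ⊆ D) ∧
  (∀ a t, IsCond ν ρ a t → (basicOpen ρ a t ∩ D).Nonempty)

/-- Members of `M_{ν,ρ}`. -/
def Meager (ν ρ : Cardinal.{0}) (W : Set (Set Ordinal.{0})) : Prop :=
  W ⊆ cantor ρ ∧ ∃ X : Set (Set (Set Ordinal.{0})), X.Nonempty ∧
    #X ≤ Cardinal.lift.{1} ν ∧ (∀ D ∈ X, DenseOpen ν ρ D) ∧ W ∩ ⋂₀ X = ∅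

/-- The covering number for category `cov(M_{ν,ρ})`. -/
def covM (ν ρ : Cardinal.{0}) : Cardinal.{0} :=
  leastCard fun Y : Set (Set (Set Ordinal.{0})) =>
    (∀ W ∈ Y, Meager ν ρ W) ∧ ⋃₀ Y = cantor ρ

/-- A (`κ`-complete) ideal on `κ`. -/
structure IdealK (κ : Cardinal.{0}) where
  mem : Set (Set Ordinal.{0})
  subset_iio : ∀ A ∈ mem, A ⊆ Iio κ.ord
  singleton_mem : ∀ α < κ.ord, {α} ∈ mem
  subset_mem : ∀ A ∈ mem, ∀ B ⊆ A, B ∈ mem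
  sUnion_mem : ∀ X : Set (Set Ordinal.{0}), X ⊆ mem → #X < Cardinal.lift.{1} κ → ⋃₀ X ∈ mem
  ne_top : Iio κ.ord ∉ mem

/-- `J⁺`, the sets (⊆ κ) not in the ideal. -/
def IdealK.plus {κ : Cardinal.{0}} (J : IdealK κ) : Set (Set Ordinal.{0}) :=
  {A | A ⊆ Iio κ.ord ∧ A ∉ J.mem}

/-- `cof(J)`. -/
def IdealK.cof {κ : Cardinal.{0}} (J : IdealK κ) : Cardinal.{0} :=
  leastCard fun X : Set (Set Ordinal.{0}) =>
    X ⊆ J.mem ∧ ∀ A, A ∈ J.mem ↔ ∃ B ∈ X, A ⊆ B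

/-- `cof̄(J)`. -/
def IdealK.cofBar {κ : Cardinal.{0}} (J : IdealK κ) : Cardinal.{0} :=
  leastCard fun X : Set (Set Ordinal.{0}) =>
    X ⊆ J.mem ∧ ∀ A ∈ J.mem, ∃ x ⊆ X, #x < Cardinal.lift.{1} κ ∧ A ⊆ ⋃₀ x

/-- `non_κ(P)`. -/
def nonK (κ : Cardinal.{0}) (P : IdealK κ → Prop) : Cardinal.{0} :=
  sInf {c | ∃ J : IdealK κ, J.cof = c ∧ ¬ P J}

/-- `non̄_κ(P)`. -/
def nonBarK (κ : Cardinal.{0}) (P : IdealK κ → Prop) : Cardinal.{0} :=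
  sInf {c | ∃ J : IdealK κ, J.cofBar = c ∧ ¬ P J}

/-- Weak `P`-point. -/
def WeakPPoint {κ : Cardinal.{0}} (J : IdealK κ) : Prop :=
  ∀ A ∈ J.plus, ∀ f : Ordinal.{0} → Ordinal.{0},
    (∀ α ∈ A, f α < κ.ord) → (∀ β, {α ∈ A | f α = β} ∈ J.mem) →
    ∃ B ∈ J.plus, B ⊆ A ∧ ∀ β, #{α ∈ B | f α = β} < Cardinal.lift.{1} κ

/-- Weak `Q`-point. -/
def WeakQPoint {κ : Cardinal.{0}} (J : IdealK κ) : Prop :=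
  ∀ A ∈ J.plus, ∀ g ∈ funOn κ,
    ∃ B ∈ J.plus, B ⊆ A ∧ ∀ α ∈ B, ∀ β ∈ B, α < β → g α < β

/-- Weakly selective ideal. -/
def WeaklySelective {κ : Cardinal.{0}} (J : IdealK κ) : Prop :=
  WeakPPoint J ∧ WeakQPoint J

/-- Weak semi-`Q`-point. -/
def WeakSemiQPoint {κ : Cardinal.{0}} (J : IdealK κ) : Prop :=
  ∀ A ∈ J.plus, ∀ f : Ordinal.{0} → Ordinal.{0},
    (∀ α ∈ A, f α < κ.ord) →
    (∀ β, #{α ∈ A | f α = β} < Cardinal.lift.{1} κ) →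
    ∃ C ∈ J.plus, C ⊆ A ∧ ∀ β < κ.ord, #{α ∈ C | f α = β} ≤ Cardinal.lift.{1} β.card

/-- `P_κ(λ)`, coded as the small subsets of `Iio λ.ord`. -/
def smallSet (κ lam : Cardinal.{0}) : Set (Set Ordinal.{0}) :=
  {a | a ⊆ Iio lam.ord ∧ #a < Cardinal.lift.{1} κ}

/-- The ideal `I_{κ,λ}` of noncofinal subsets of `P_κ(λ)`. -/
def Ikl (κ lam : Cardinal.{0}) : Set (Set (Set Ordinal.{0})) :=
  {A | A ⊆ smallSet κ lam ∧ ∃ a ∈ smallSet κ lam, ∀ b ∈ A, ¬ a ⊆ b}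

/-- A (`κ`-complete fine) ideal on `P_κ(λ)`. -/
structure IdealP (κ lam : Cardinal.{0}) where
  mem : Set (Set (Set Ordinal.{0}))
  subset_pk : ∀ A ∈ mem, A ⊆ smallSet κ lam
  fine : Ikl κ lam ⊆ mem
  subset_mem : ∀ A ∈ mem, ∀ B ⊆ A, B ∈ mem
  sUnion_mem : ∀ X : Set (Set (Set Ordinal.{0})), X ⊆ mem →
    #X < Cardinal.lift.{1} κ → ⋃₀ X ∈ mem
  ne_top : smallSet κ lam ∉ mem

/-- `H⁺` computed from the underlying collection `Hm` of an ideal on `P_κ(λ)`. -/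
def plusOf (κ lam : Cardinal.{0}) (Hm : Set (Set (Set Ordinal.{0}))) :
    Set (Set (Set Ordinal.{0})) :=
  {A | A ⊆ smallSet κ lam ∧ A ∉ Hm}

/-- `H⁺`. -/
def IdealP.plus {κ lam : Cardinal.{0}} (H : IdealP κ lam) : Set (Set (Set Ordinal.{0})) :=
  plusOf κ lam H.mem

/-- `cof(H)`. -/
def IdealP.cof {κ lam : Cardinal.{0}} (H : IdealP κ lam) : Cardinal.{0} :=
  leastCard fun X : Set (Set (Set Ordinal.{0})) =>
    X ⊆ H.mem ∧ ∀ A, A ∈ H.mem ↔ ∃ B ∈ X, A ⊆ B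

/-- `cof̄(H)`. -/
def IdealP.cofBar {κ lam : Cardinal.{0}} (H : IdealP κ lam) : Cardinal.{0} :=
  leastCard fun X : Set (Set (Set Ordinal.{0})) =>
    X ⊆ H.mem ∧ ∀ A ∈ H.mem, ∃ x ⊆ X, #x < Cardinal.lift.{1} κ ∧ A ⊆ ⋃₀ x

/-- `d^κ_{κ,λ}`. -/
def domP (κ lam : Cardinal.{0}) : Cardinal.{0} :=
  leastCard fun F : Set (Ordinal.{0} → Set Ordinal.{0}) =>
    (∀ f ∈ F, ∀ α < κ.ord, f α ∈ smallSet κ lam) ∧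
    ∀ g : Ordinal.{0} → Set Ordinal.{0}, (∀ α < κ.ord, g α ∈ smallSet κ lam) →
      ∃ f ∈ F, ∀ α < κ.ord, g α ⊆ f α

/-- A maximal almost disjoint family of size `≥ κ` for `H` (a member of `M_H^{≥κ}`). -/
def IsMad {κ lam : Cardinal.{0}} (H : IdealP κ lam) (Q : Set (Set (Set Ordinal.{0}))) : Prop :=
  Q ⊆ H.plus ∧ Cardinal.lift.{1} κ ≤ #Q ∧
  (∀ A ∈ Q, ∀ B ∈ Q, A ≠ B → A ∩ B ∈ H.mem) ∧
  ∀ C ∈ H.plus, ∃ A ∈ Q, A ∩ C ∈ H.plus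

/-- The (small) cardinal `c` with `lift c = c'`, used to pull `λ^{<κ} = |P_κ(λ)|` down. -/
def downCard (c : Cardinal.{1}) : Cardinal.{0} :=
  sInf {d : Cardinal.{0} | Cardinal.lift.{1} d = c}

open Classical in
/-- The number `a_H`. -/
def aNum {κ lam : Cardinal.{0}} (H : IdealP κ lam) : Cardinal.{0} :=
  if ∃ Q, IsMad H Q then sInf {c | ∃ Q, IsMad H Q ∧ Cardinal.lift.{1} c = #Q}
  else 2 ^ Order.succ (downCard #(smallSet κ lam))

/-- Weak `π`-point. -/
def WeakPiPoint {κ lam : Cardinal.{0}} (H : IdealP κ lam) : Prop :=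
  ∀ f : Ordinal.{0} → Set (Set Ordinal.{0}), (∀ α < κ.ord, f α ∈ H.mem) →
    ∀ A ∈ H.plus, ∃ B ∈ H.plus, B ⊆ A ∧ ∀ α < κ.ord, B ∩ f α ∈ Ikl κ lam

/-- `∪(a ∩ κ)`. -/
def supK (κ : Cardinal.{0}) (a : Set Ordinal.{0}) : Ordinal.{0} :=
  sSup (a ∩ Iio κ.ord)

/-- The relation `a ≺ b`. -/
def prec (κ : Cardinal.{0}) (a b : Set Ordinal.{0}) : Prop :=
  a ⊆ b ∧ supK κ a < supK κ b

/-- `[A]_κ²`. -/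
def pairsK (κ : Cardinal.{0}) (A : Set (Set Ordinal.{0})) : Set (Ordinal.{0} × Set Ordinal.{0}) :=
  {p | ∃ a ∈ A, ∃ b ∈ A, supK κ a < supK κ b ∧ p = (supK κ a, b)}

/-- `[A]_≺²`. -/
def pairsPrec (κ : Cardinal.{0}) (A : Set (Set Ordinal.{0})) :
    Set (Ordinal.{0} × Set Ordinal.{0}) :=
  {p | ∃ a ∈ A, ∃ b ∈ A, prec κ a b ∧ p = (supK κ a, b)}

/-- `[A]_{κ,κ}²`. -/
def pairsKK (κ : Cardinal.{0}) (A : Set (Set Ordinal.{0})) : Set (Ordinal.{0} × Ordinal.{0}) :=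
  {p | ∃ a ∈ A, ∃ b ∈ A, supK κ a < supK κ b ∧ p = (supK κ a, supK κ b)}

/-- `S` is a set of ordinals of order type `α`. -/
def OrdType (S : Set Ordinal.{0}) (α : Ordinal.{0}) : Prop :=
  ∃ e : Ordinal.{0} → Ordinal.{0},
    (∀ i < α, ∀ j < α, i < j → e i < e j) ∧ e '' Iio α = S

/-- `(B, ≺)` has order type `α`. -/
def OrdTypePrec (κ : Cardinal.{0}) (B : Set (Set Ordinal.{0})) (α : Ordinal.{0}) : Prop :=
  ∃ e : Ordinal.{0} → Set Ordinal.{0},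
    (∀ i < α, ∀ j < α, i < j → prec κ (e i) (e j)) ∧ e '' Iio α = B

/-- The partition relation `κ → (κ, θ)²`. -/
def ArrowKTheta (κ : Cardinal.{0}) (θ : Ordinal.{0}) : Prop :=
  ∀ f : Ordinal.{0} → Ordinal.{0} → Fin 2, ∃ A ⊆ Iio κ.ord,
    (OrdType A κ.ord ∧ ∀ α ∈ A, ∀ β ∈ A, α < β → f α β = 0) ∨
    (OrdType A θ ∧ ∀ α ∈ A, ∀ β ∈ A, α < β → f α β = 1)

/-- `κ` is weakly compact. -/
def WeaklyCompact (κ : Cardinal.{0}) : Prop :=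
  ∀ f : Ordinal.{0} → Ordinal.{0} → Fin 2, ∃ A ⊆ Iio κ.ord,
    OrdType A κ.ord ∧ ∃ i, ∀ α ∈ A, ∀ β ∈ A, α < β → f α β = i

/-- The partition relation `J⁺ → (J⁺, α)²` for an ideal on `κ`. -/
def ArrowJ {κ : Cardinal.{0}} (J : IdealK κ) (α : Ordinal.{0}) : Prop :=
  ∀ A ∈ J.plus, ∀ f : Ordinal.{0} → Ordinal.{0} → Fin 2,
    ∃ B ⊆ A, (B ∈ J.plus ∧ ∀ β ∈ B, ∀ γ ∈ B, β < γ → f β γ = 0) ∨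
             (OrdType B α ∧ ∀ β ∈ B, ∀ γ ∈ B, β < γ → f β γ = 1)

/-- The square bracket relation `J⁺ → [J⁺]_ρ²` for an ideal on `κ`. -/
def SqBrJ {κ : Cardinal.{0}} (J : IdealK κ) (ρ : Cardinal.{0}) : Prop :=
  ∀ A ∈ J.plus, ∀ f : Ordinal.{0} → Ordinal.{0} → Ordinal.{0},
    (∀ β ∈ A, ∀ γ ∈ A, β < γ → f β γ < ρ.ord) →
    ∃ B ∈ J.plus, B ⊆ A ∧ {ξ | ∃ β ∈ B, ∃ γ ∈ B, β < γ ∧ f β γ = ξ} ≠ Iio ρ.ord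

/-- `H⁺ →_κ (H⁺, α)²`. -/
def ArrowP (κ lam : Cardinal.{0}) (Hm : Set (Set (Set Ordinal.{0}))) (α : Ordinal.{0}) : Prop :=
  ∀ F : Ordinal.{0} → Set Ordinal.{0} → Fin 2, ∀ A ∈ plusOf κ lam Hm,
    ∃ B ⊆ A, (B ∈ plusOf κ lam Hm ∧ ∀ p ∈ pairsK κ B, F p.1 p.2 = 0) ∨
             (OrdTypePrec κ B α ∧ ∀ p ∈ pairsK κ B, F p.1 p.2 = 1)

/-- `H⁺ →_{κ,κ} (H⁺, α)²`. -/
def ArrowPKK (κ lam : Cardinal.{0}) (Hm : Set (Set (Set Ordinal.{0}))) (α : Ordinal.{0}) : Prop :=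
  ∀ F : Ordinal.{0} → Ordinal.{0} → Fin 2, ∀ A ∈ plusOf κ lam Hm,
    ∃ B ⊆ A, (B ∈ plusOf κ lam Hm ∧ ∀ p ∈ pairsKK κ B, F p.1 p.2 = 0) ∨
             (OrdTypePrec κ B α ∧ ∀ p ∈ pairsKK κ B, F p.1 p.2 = 1)

/-- `H⁺ →_{κ,κ} (H⁺; α)²`. -/
def ArrowPKKsemi (κ lam : Cardinal.{0}) (Hm : Set (Set (Set Ordinal.{0}))) (α : Ordinal.{0}) :
    Prop :=
  ∀ F : Ordinal.{0} → Ordinal.{0} → Fin 2, ∀ A ∈ plusOf κ lam Hm,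
    ∃ B ⊆ A, (B ∈ plusOf κ lam Hm ∧ ∀ p ∈ pairsKK κ B, F p.1 p.2 = 0) ∨
             (OrdType {o | ∃ a ∈ B, supK κ a = o} α ∧ ∀ p ∈ pairsKK κ B, F p.1 p.2 = 1)

/-- `H⁺ →_κ (H⁺)²`. -/
def ArrowPConst (κ lam : Cardinal.{0}) (Hm : Set (Set (Set Ordinal.{0}))) : Prop :=
  ∀ F : Ordinal.{0} → Set Ordinal.{0} → Fin 2, ∀ A ∈ plusOf κ lam Hm,
    ∃ B ∈ plusOf κ lam Hm, B ⊆ A ∧ ∃ i, ∀ p ∈ pairsK κ B, F p.1 p.2 = i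

/-- `H⁺ →_{κ,κ} [H⁺]_ρ²`. -/
def SqBrPKK (κ lam : Cardinal.{0}) (Hm : Set (Set (Set Ordinal.{0}))) (ρ : Cardinal.{0}) : Prop :=
  ∀ F : Ordinal.{0} → Ordinal.{0} → Ordinal.{0},
    (∀ α β : Ordinal.{0}, α < β → β < κ.ord → F α β < ρ.ord) →
    ∀ A ∈ plusOf κ lam Hm, ∃ B ∈ plusOf κ lam Hm, B ⊆ A ∧
      {ξ | ∃ p ∈ pairsKK κ B, F p.1 p.2 = ξ} ≠ Iio ρ.ord

/-- The class `K(κ,λ)`. -/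
def Kset (κ lam : Cardinal.{0}) : Set Cardinal.{0} :=
  {σ | lam ≤ σ ∧ ∃ T ⊆ smallSet κ lam, Cardinal.lift.{1} σ = #T ∧
    ∀ a ∈ smallSet κ lam, #{t ∈ T | t ⊆ a} < Cardinal.lift.{1} κ}

end

end PaperFormal

namespace PaperFormal

/-! Enumerate a maximal almost disjoint family for `H` of size `κ` as `⟨Q_α : α < κ⟩` and
let `K` consist of the sets `A` with `A ∩ Q_α ∈ H` for all but fewer than `κ` many `α`. Each `Q_α`
lies in `K`, yet every `K`-positive set meets `κ` many `Q_α` in an `H`-positive, hence cofinal,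
set; so `K` is not a weak π-point. If the exceptional indices of `A ∈ K` lie
below `γ`, maximality gives `A \ ⋃_{α<γ} Q_α ∈ H`; thus `K` is generated by `H` together with the
`κ` sets `⋃_{α<γ} Q_α`, which bounds `cof K` and `cof̄ K`. -/

theorem leastCard_le_of_mk_le {X : Type 1} {P : Set X → Prop} {F : Set X} (hF : P F)
    {c : Cardinal.{0}} (hc : #F ≤ Cardinal.lift.{1} c) : leastCard P ≤ c := by
  obtain ⟨d, hd⟩ := Cardinal.mem_range_lift_of_le hc
  exact (csInf_le (s := {c | ∃ G : Set X, P G ∧ Cardinal.lift.{1} c = #G})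
    (OrderBot.bddBelow _) ⟨F, hF, hd⟩).trans (Cardinal.lift_le.1 (hd ▸ hc))

theorem exists_lift_leastCard_eq {X : Type 1} {P : Set X → Prop} {F : Set X} (hF : P F)
    {c : Cardinal.{0}} (hc : #F ≤ Cardinal.lift.{1} c) :
    ∃ G : Set X, P G ∧ Cardinal.lift.{1} (leastCard P) = #G := by
  obtain ⟨d, hd⟩ := Cardinal.mem_range_lift_of_le hc
  exact csInf_mem (s := {c | ∃ G : Set X, P G ∧ Cardinal.lift.{1} c = #G}) ⟨d, F, hF, hd⟩

theorem lift_downCard {c : Cardinal.{1}} {d : Cardinal.{0}} (h : c ≤ Cardinal.lift.{1} d) :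
    Cardinal.lift.{1} (downCard c) = c :=
  csInf_mem (s := {d | Cardinal.lift.{1} d = c}) (Cardinal.mem_range_lift_of_le h)

theorem mk_Iio_lt_lift {κ : Cardinal.{0}} {γ : Ordinal.{0}} (hγ : γ < κ.ord) :
    #(Iio γ) < Cardinal.lift.{1} κ := by
  rw [Cardinal.mk_Iio_ordinal]
  exact Cardinal.lift_lt.2 (Cardinal.lt_ord.1 hγ)

theorem exists_lt_ord_subset_Iio {κ : Cardinal.{0}} (hκ : κ.IsRegular) {s : Set Ordinal.{0}}
    (hs : s ⊆ Iio κ.ord) (hcard : #s < Cardinal.lift.{1} κ) : ∃ γ < κ.ord, s ⊆ Iio γ := by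
  have hcof : #s < (Ordinal.lift.{1} κ.ord).cof := by
    rwa [← Ordinal.lift_cof, hκ.cof_ord]
  have hbdd : BddAbove ((· + 1) '' s) := ⟨κ.ord, by
    rintro _ ⟨β, hβ, rfl⟩
    exact Order.add_one_le_of_lt (hs hβ)⟩
  exact ⟨_, Ordinal.sSup_add_one_lt_of_lt_cof hcof hs,
    fun α hα => (lt_add_one α).trans_le (le_csSup hbdd (mem_image_of_mem _ hα))⟩

theorem singleton_mem_smallSet {κ lam : Cardinal.{0}} (hκ : 1 < κ) {α : Ordinal.{0}}
    (hα : α < lam.ord) : ({α} : Set Ordinal.{0}) ∈ smallSet κ lam :=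
  ⟨singleton_subset_iff.2 hα, by simpa using hκ⟩

theorem lift_le_mk_smallSet {κ lam : Cardinal.{0}} (hκ : 1 < κ) :
    Cardinal.lift.{1} lam ≤ #(smallSet κ lam) := by
  have hlam : #(Iio lam.ord) = Cardinal.lift.{1} lam := by simp [Cardinal.mk_Iio_ordinal]
  rw [← hlam]
  refine Cardinal.mk_le_of_injective
    (f := fun α : Iio lam.ord => (⟨{α.1}, singleton_mem_smallSet hκ α.2⟩ : smallSet κ lam)) ?_
  intro α β h
  exact Subtype.ext (singleton_eq_singleton_iff.1 (congrArg Subtype.val h))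

theorem mk_smallSet_le (κ lam : Cardinal.{0}) :
    #(smallSet κ lam) ≤ Cardinal.lift.{1} ((2 : Cardinal.{0}) ^ lam) :=
  calc #(smallSet κ lam) ≤ #(𝒫 (Iio lam.ord)) := Cardinal.mk_le_mk_of_subset fun _ ha => ha.1
    _ = Cardinal.lift.{1} ((2 : Cardinal.{0}) ^ lam) := by
      simp [Cardinal.mk_powerset, Cardinal.mk_Iio_ordinal]

theorem mk_le_of_forall_subset_smallSet (κ lam : Cardinal.{0}) {Y : Set (Set (Set Ordinal.{0}))}
    (hY : ∀ A ∈ Y, A ⊆ smallSet κ lam) :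
    #Y ≤ Cardinal.lift.{1} ((2 : Cardinal.{0}) ^ (2 : Cardinal.{0}) ^ lam) :=
  calc #Y ≤ #(𝒫 (smallSet κ lam)) := Cardinal.mk_le_mk_of_subset hY
    _ = 2 ^ #(smallSet κ lam) := Cardinal.mk_powerset _
    _ ≤ 2 ^ Cardinal.lift.{1} ((2 : Cardinal.{0}) ^ lam) :=
      Cardinal.power_le_power_left two_ne_zero (mk_smallSet_le κ lam)
    _ = Cardinal.lift.{1} ((2 : Cardinal.{0}) ^ (2 : Cardinal.{0}) ^ lam) := by simp

namespace IdealP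

variable {κ lam : Cardinal.{0}}

theorem empty_mem (H : IdealP κ lam) (hκ : κ ≠ 0) : (∅ : Set (Set Ordinal.{0})) ∈ H.mem := by
  simpa using H.sUnion_mem ∅ (empty_subset _) (by simpa [pos_iff_ne_zero] using hκ)

theorem union_mem (H : IdealP κ lam) (hκ : ℵ₀ ≤ κ) {A B : Set (Set Ordinal.{0})}
    (hA : A ∈ H.mem) (hB : B ∈ H.mem) : A ∪ B ∈ H.mem := by
  rw [← sUnion_pair]
  refine H.sUnion_mem _ (pair_subset hA hB) ?_
  exact ((finite_singleton B).insert A).lt_aleph0.trans_le (by simpa using hκ)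

theorem singleton_mem (H : IdealP κ lam) (hκ : 1 < κ) (hκlam : κ ≤ lam) {a : Set Ordinal.{0}}
    (ha : a ∈ smallSet κ lam) : ({a} : Set (Set Ordinal.{0})) ∈ H.mem := by
  obtain ⟨ξ, hξ, hξa⟩ : ∃ ξ ∈ Iio lam.ord, ξ ∉ a := by
    refine not_subset.1 fun hsub => ?_
    have hlam : Cardinal.lift.{1} lam ≤ #a := by
      simpa [Cardinal.mk_Iio_ordinal] using Cardinal.mk_le_mk_of_subset hsub
    exact ((Cardinal.lift_le.2 hκlam).trans hlam).not_gt ha.2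
  refine H.fine ⟨singleton_subset_iff.2 ha, {ξ}, singleton_mem_smallSet hκ hξ, ?_⟩
  rintro b rfl hξb
  exact hξa (hξb rfl)

theorem lift_le_mk_of_smallSet_subset_sUnion (H : IdealP κ lam) {X : Set (Set (Set Ordinal.{0}))}
    (hX : X ⊆ H.mem) (hcov : smallSet κ lam ⊆ ⋃₀ X) : Cardinal.lift.{1} κ ≤ #X :=
  not_lt.1 fun hlt => H.ne_top (H.subset_mem _ (H.sUnion_mem X hX hlt) _ hcov)

theorem exists_isMad_mk_eq_of_aNum_eq (H : IdealP κ lam) (hκ : 1 < κ) (hκlam : κ < lam)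
    (ha : aNum H = κ) : ∃ Q, IsMad H Q ∧ #Q = Cardinal.lift.{1} κ := by
  by_cases hex : ∃ Q, IsMad H Q
  · obtain ⟨Q₀, hQ₀⟩ := hex
    obtain ⟨d, hd⟩ := Cardinal.mem_range_lift_of_le
      (mk_le_of_forall_subset_smallSet κ lam fun A hA => (hQ₀.1 hA).1)
    rw [aNum, if_pos ⟨Q₀, hQ₀⟩] at ha
    obtain ⟨Q, hQ, hQcard⟩ := ha ▸ csInf_mem
      (s := {c | ∃ Q, IsMad H Q ∧ Cardinal.lift.{1} c = #Q}) ⟨d, Q₀, hQ₀, hd⟩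
    exact ⟨Q, hQ, hQcard.symm⟩
  · rw [aNum, if_neg hex] at ha
    have hlam : lam ≤ downCard #(smallSet κ lam) := by
      rw [← Cardinal.lift_le.{1}, lift_downCard (mk_smallSet_le κ lam)]
      exact lift_le_mk_smallSet hκ
    have hgt : κ < 2 ^ Order.succ (downCard #(smallSet κ lam)) :=
      (hκlam.trans_le hlam).trans ((Order.lt_succ _).trans (Cardinal.cantor _))
    exact absurd ha hgt.ne'

def meetIndices (H : IdealP κ lam) (f : Ordinal.{0} → Set (Set Ordinal.{0}))
    (A : Set (Set Ordinal.{0})) : Set Ordinal.{0} :=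
  {α | α < κ.ord ∧ A ∩ f α ∉ H.mem}

section meetIndices

variable {H : IdealP κ lam} {f : Ordinal.{0} → Set (Set Ordinal.{0})}

theorem meetIndices_subset_Iio (A : Set (Set Ordinal.{0})) : H.meetIndices f A ⊆ Iio κ.ord :=
  fun _ hα => hα.1

theorem meetIndices_mono {A B : Set (Set Ordinal.{0})} (h : B ⊆ A) :
    H.meetIndices f B ⊆ H.meetIndices f A :=
  fun _ hα => ⟨hα.1, fun hA => hα.2 (H.subset_mem _ hA _ (inter_subset_inter_left _ h))⟩

theorem meetIndices_eq_empty {A : Set (Set Ordinal.{0})} (hA : A ∈ H.mem) :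
    H.meetIndices f A = ∅ :=
  eq_empty_of_forall_notMem fun _ hα => hα.2 (H.subset_mem _ hA _ inter_subset_left)

theorem meetIndices_smallSet (hf : ∀ α < κ.ord, f α ∈ H.plus) :
    H.meetIndices f (smallSet κ lam) = Iio κ.ord := by
  refine Subset.antisymm (meetIndices_subset_Iio _) fun α hα => ⟨hα, ?_⟩
  rw [inter_eq_self_of_subset_right (hf α hα).1]
  exact (hf α hα).2

theorem meetIndices_sUnion_subset {X : Set (Set (Set Ordinal.{0}))}
    (hX : #X < Cardinal.lift.{1} κ) :
    H.meetIndices f (⋃₀ X) ⊆ ⋃ A ∈ X, H.meetIndices f A := by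
  rintro α ⟨hα, hnot⟩
  by_contra hcon
  simp only [mem_iUnion₂, not_exists] at hcon
  refine hnot ?_
  have hmem := H.sUnion_mem ((· ∩ f α) '' X)
    (by rintro _ ⟨A, hA, rfl⟩; by_contra h; exact hcon A hA ⟨hα, h⟩)
    (Cardinal.mk_image_le.trans_lt hX)
  rwa [sUnion_image, ← iUnion₂_inter, ← sUnion_eq_biUnion] at hmem

end meetIndices

def meetFew (H : IdealP κ lam) (hκ : κ.IsRegular) (f : Ordinal.{0} → Set (Set Ordinal.{0}))
    (hf : ∀ α < κ.ord, f α ∈ H.plus) : IdealP κ lam where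
  mem := {A | A ⊆ smallSet κ lam ∧ #(H.meetIndices f A) < Cardinal.lift.{1} κ}
  subset_pk _ hA := hA.1
  fine A hA := ⟨hA.1, by simpa [meetIndices_eq_empty (H.fine hA)] using hκ.pos⟩
  subset_mem _ hA _ hBA :=
    ⟨hBA.trans hA.1, (Cardinal.mk_le_mk_of_subset (meetIndices_mono hBA)).trans_lt hA.2⟩
  sUnion_mem X hX hXcard :=
    ⟨sUnion_subset fun _ hA => (hX hA).1,
      (Cardinal.mk_le_mk_of_subset (meetIndices_sUnion_subset hXcard)).trans_lt
        ((Cardinal.card_biUnion_lt_iff_forall_of_isRegular hκ.lift hXcard).2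
          fun _ hA => (hX hA).2)⟩
  ne_top h := by simpa [meetIndices_smallSet hf, Cardinal.mk_Iio_ordinal] using h.2

theorem subset_meetFew (H : IdealP κ lam) (hκ : κ.IsRegular)
    (f : Ordinal.{0} → Set (Set Ordinal.{0})) (hf : ∀ α < κ.ord, f α ∈ H.plus) :
    H.mem ⊆ (H.meetFew hκ f hf).mem :=
  fun A hA => ⟨H.subset_pk A hA, by simpa [meetIndices_eq_empty hA] using hκ.pos⟩

theorem not_weakPiPoint_meetFew (H : IdealP κ lam) (hκ : κ.IsRegular)
    {f : Ordinal.{0} → Set (Set Ordinal.{0})} (hf : ∀ α < κ.ord, f α ∈ H.plus)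
    (hmem : ∀ α < κ.ord, f α ∈ (H.meetFew hκ f hf).mem) : ¬ WeakPiPoint (H.meetFew hκ f hf) := by
  intro hw
  obtain ⟨B, hB, -, hBf⟩ := hw f hmem _ ⟨Subset.rfl, (H.meetFew hκ f hf).ne_top⟩
  obtain ⟨α, hα, hαB⟩ : (H.meetIndices f B).Nonempty := by
    refine nonempty_iff_ne_empty.2 fun h => hB.2 ⟨hB.1, ?_⟩
    simpa [h] using hκ.pos
  exact hαB (H.fine (hBf α hα))

end IdealP

def IsMadSeq {κ lam : Cardinal.{0}} (H : IdealP κ lam) (f : Ordinal.{0} → Set (Set Ordinal.{0})) :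
    Prop :=
  (∀ α < κ.ord, f α ∈ H.plus) ∧
  (∀ α < κ.ord, ∀ β < κ.ord, α ≠ β → f α ∩ f β ∈ H.mem) ∧
  ∀ C ∈ H.plus, ∃ α < κ.ord, f α ∩ C ∈ H.plus

theorem IsMad.exists_isMadSeq {κ lam : Cardinal.{0}} {H : IdealP κ lam}
    {Q : Set (Set (Set Ordinal.{0}))} (hQ : IsMad H Q) (hcard : #Q = Cardinal.lift.{1} κ) :
    ∃ f, IsMadSeq H f := by
  obtain ⟨e⟩ : Nonempty (Iio κ.ord ≃ Q) :=
    Cardinal.eq.1 (by rw [Cardinal.mk_Iio_ordinal, Cardinal.card_ord, hcard])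
  let f : Ordinal.{0} → Set (Set Ordinal.{0}) := fun α => if h : α < κ.ord then e ⟨α, h⟩ else ∅
  have hf : ∀ α (h : α < κ.ord), f α = e ⟨α, h⟩ := fun α h => dif_pos h
  refine ⟨f, fun α hα => ?_, fun α hα β hβ hne => ?_, fun C hC => ?_⟩
  · rw [hf α hα]
    exact hQ.1 (e _).2
  · rw [hf α hα, hf β hβ]
    refine hQ.2.2.1 _ (e _).2 _ (e _).2 fun h => hne ?_
    exact congrArg Subtype.val (e.injective (Subtype.ext h))
  · obtain ⟨A, hA, hAC⟩ := hQ.2.2.2 C hC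
    refine ⟨e.symm ⟨A, hA⟩, (e.symm ⟨A, hA⟩).2, ?_⟩
    rwa [hf _ (e.symm ⟨A, hA⟩).2, Subtype.coe_eta, e.apply_symm_apply]

namespace IsMadSeq

variable {κ lam : Cardinal.{0}} {H : IdealP κ lam} {f : Ordinal.{0} → Set (Set Ordinal.{0})}

theorem mem_meetFew (hf : IsMadSeq H f) (hκ : κ.IsRegular) {α : Ordinal.{0}} (hα : α < κ.ord) :
    f α ∈ (H.meetFew hκ f hf.1).mem := by
  refine ⟨(hf.1 α hα).1, (Cardinal.mk_le_mk_of_subset (t := {α}) ?_).trans_lt ?_⟩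
  · rintro β ⟨hβ, hβα⟩
    by_contra hne
    exact hβα (hf.2.1 α hα β hβ (Ne.symm hne))
  · simpa using Cardinal.one_lt_aleph0.trans_le hκ.aleph0_le

theorem biUnion_mem_meetFew (hf : IsMadSeq H f) (hκ : κ.IsRegular) {γ : Ordinal.{0}}
    (hγ : γ < κ.ord) : ⋃ α ∈ Iio γ, f α ∈ (H.meetFew hκ f hf.1).mem := by
  rw [← sUnion_image]
  refine (H.meetFew hκ f hf.1).sUnion_mem _ ?_ (Cardinal.mk_image_le.trans_lt (mk_Iio_lt_lift hγ))
  rintro _ ⟨α, hα, rfl⟩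
  exact hf.mem_meetFew hκ (lt_trans hα hγ)

theorem diff_biUnion_mem (hf : IsMadSeq H f) {A : Set (Set Ordinal.{0})}
    (hA : A ⊆ smallSet κ lam) {γ : Ordinal.{0}} (hγ : H.meetIndices f A ⊆ Iio γ) :
    A \ ⋃ α ∈ Iio γ, f α ∈ H.mem := by
  by_contra hC
  obtain ⟨α, hα, hαC⟩ := hf.2.2 _ ⟨sdiff_subset.trans hA, hC⟩
  refine hαC.2 ?_
  by_cases hαγ : α < γ
  · have hκ : κ ≠ 0 := by rintro rfl; simp at hα
    convert H.empty_mem hκ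
    exact eq_empty_of_forall_notMem fun x hx => hx.2.2 (mem_biUnion hαγ hx.1)
  · have hAα : A ∩ f α ∈ H.mem := by
      by_contra h
      exact hαγ (hγ ⟨hα, h⟩)
    exact H.subset_mem _ hAα _ fun x hx => ⟨hx.2.1, hx.1⟩

theorem exists_diff_biUnion_mem (hf : IsMadSeq H f) (hκ : κ.IsRegular)
    {A : Set (Set Ordinal.{0})} (hA : A ∈ (H.meetFew hκ f hf.1).mem) :
    ∃ γ < κ.ord, A \ ⋃ α ∈ Iio γ, f α ∈ H.mem := by
  obtain ⟨γ, hγ, hsub⟩ := exists_lt_ord_subset_Iio hκ (IdealP.meetIndices_subset_Iio A) hA.2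
  exact ⟨γ, hγ, hf.diff_biUnion_mem hA.1 hsub⟩

theorem cof_meetFew_le (hf : IsMadSeq H f) (hκ : κ.IsRegular) (hκlam : κ ≤ lam) :
    (H.meetFew hκ f hf.1).cof ≤ H.cof := by
  set K := H.meetFew hκ f hf.1
  have h1κ : 1 < κ := Cardinal.one_lt_aleph0.trans_le hκ.aleph0_le
  obtain ⟨X, ⟨hXH, hXcof⟩, hXcard⟩ := exists_lift_leastCard_eq
    (P := fun X => X ⊆ H.mem ∧ ∀ A, A ∈ H.mem ↔ ∃ B ∈ X, A ⊆ B)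
    ⟨Subset.rfl, fun A =>
      ⟨fun h => ⟨A, h, Subset.rfl⟩, fun ⟨B, hB, hAB⟩ => H.subset_mem B hB A hAB⟩⟩
    (mk_le_of_forall_subset_smallSet κ lam H.subset_pk)
  have hκX : Cardinal.lift.{1} κ ≤ #X := H.lift_le_mk_of_smallSet_subset_sUnion hXH fun a ha => by
    obtain ⟨B, hB, haB⟩ := (hXcof {a}).1 (H.singleton_mem h1κ hκlam ha)
    exact ⟨B, hB, haB rfl⟩
  set Y := image2 (fun B γ => B ∪ ⋃ α ∈ Iio γ, f α) X (Iio κ.ord)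
  have hYK : Y ⊆ K.mem := by
    rintro _ ⟨B, hB, γ, hγ, rfl⟩
    exact K.union_mem hκ.aleph0_le (H.subset_meetFew hκ f hf.1 (hXH hB))
      (hf.biUnion_mem_meetFew hκ hγ)
  have hYcof : ∀ A, A ∈ K.mem ↔ ∃ B ∈ Y, A ⊆ B := by
    refine fun A => ⟨fun hA => ?_, fun ⟨S, hS, hAS⟩ => K.subset_mem S (hYK hS) A hAS⟩
    obtain ⟨γ, hγ, hdiff⟩ := hf.exists_diff_biUnion_mem hκ hA
    obtain ⟨B, hB, hsub⟩ := (hXcof _).1 hdiff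
    exact ⟨_, mem_image2_of_mem hB hγ,
      (subset_sdiff_union A _).trans (union_subset_union_left _ hsub)⟩
  refine leastCard_le_of_mk_le (F := Y) ⟨hYK, hYcof⟩ ?_
  calc #Y ≤ #X * #(Iio κ.ord) := Cardinal.mk_image2_le
    _ = #X := by
      rw [Cardinal.mk_Iio_ordinal, Cardinal.card_ord]
      exact Cardinal.mul_eq_left ((Cardinal.lift_le.2 hκ.aleph0_le).trans' (by simp) |>.trans hκX)
        hκX (by simpa using hκ.ne_zero)
    _ = Cardinal.lift.{1} H.cof := hXcard.symm

theorem cofBar_meetFew_le (hf : IsMadSeq H f) (hκ : κ.IsRegular) (hκlam : κ ≤ lam) :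
    (H.meetFew hκ f hf.1).cofBar ≤ H.cofBar := by
  have h1κ : 1 < κ := Cardinal.one_lt_aleph0.trans_le hκ.aleph0_le
  have hℵ₀κ : ℵ₀ ≤ Cardinal.lift.{1} κ := by simpa using hκ.aleph0_le
  obtain ⟨X, ⟨hXH, hXcov⟩, hXcard⟩ := exists_lift_leastCard_eq
    (P := fun X => X ⊆ H.mem ∧ ∀ A ∈ H.mem, ∃ x ⊆ X, #x < Cardinal.lift.{1} κ ∧ A ⊆ ⋃₀ x)
    ⟨Subset.rfl, fun A hA => ⟨{A}, singleton_subset_iff.2 hA, by simpa using h1κ,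
      fun _ hx => ⟨A, rfl, hx⟩⟩⟩
    (mk_le_of_forall_subset_smallSet κ lam H.subset_pk)
  have hκX : Cardinal.lift.{1} κ ≤ #X := H.lift_le_mk_of_smallSet_subset_sUnion hXH fun a ha => by
    obtain ⟨x, hxX, -, hax⟩ := hXcov {a} (H.singleton_mem h1κ hκlam ha)
    obtain ⟨B, hB, haB⟩ := hax rfl
    exact ⟨B, hxX hB, haB⟩
  have hYK : X ∪ f '' Iio κ.ord ⊆ (H.meetFew hκ f hf.1).mem := by
    refine union_subset (hXH.trans (H.subset_meetFew hκ f hf.1)) ?_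
    rintro _ ⟨α, hα, rfl⟩
    exact hf.mem_meetFew hκ hα
  have hYcov : ∀ A ∈ (H.meetFew hκ f hf.1).mem, ∃ x ⊆ X ∪ f '' Iio κ.ord,
      #x < Cardinal.lift.{1} κ ∧ A ⊆ ⋃₀ x := by
    intro A hA
    obtain ⟨γ, hγ, hdiff⟩ := hf.exists_diff_biUnion_mem hκ hA
    obtain ⟨x, hxX, hxcard, hx⟩ := hXcov _ hdiff
    refine ⟨x ∪ f '' Iio γ, union_subset_union hxX (image_mono (Iio_subset_Iio hγ.le)), ?_, ?_⟩
    · exact (Cardinal.mk_union_le _ _).trans_lt (Cardinal.add_lt_of_lt hℵ₀κ hxcard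
        (Cardinal.mk_image_le.trans_lt (mk_Iio_lt_lift hγ)))
    · rw [sUnion_union, sUnion_image]
      exact (subset_sdiff_union A _).trans (union_subset_union_left _ hx)
  refine leastCard_le_of_mk_le (F := X ∪ f '' Iio κ.ord) ⟨hYK, hYcov⟩ ?_
  calc #↥(X ∪ f '' Iio κ.ord) ≤ #X + #(f '' Iio κ.ord) := Cardinal.mk_union_le _ _
    _ ≤ #X + Cardinal.lift.{1} κ := by
      gcongr
      simpa [Cardinal.mk_Iio_ordinal] using Cardinal.mk_image_le (f := f) (s := Iio κ.ord)
    _ = #X := Cardinal.add_eq_left (hℵ₀κ.trans hκX) hκX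
    _ = Cardinal.lift.{1} H.cofBar := hXcard.symm

end IsMadSeq

theorem exists_not_weakPiPoint_general (κ lam : Cardinal.{0}) (hreg : κ.IsRegular)
    (hlt : κ < lam) (H : IdealP κ lam) (ha : aNum H = κ) :
    ∃ K : IdealP κ lam, ¬ WeakPiPoint K ∧ K.cof ≤ H.cof ∧ K.cofBar ≤ H.cofBar := by
  obtain ⟨Q, hQ, hQcard⟩ :=
    H.exists_isMad_mk_eq_of_aNum_eq (Cardinal.one_lt_aleph0.trans_le hreg.aleph0_le) hlt ha
  obtain ⟨f, hf⟩ := IsMad.exists_isMadSeq hQ hQcard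
  exact ⟨H.meetFew hreg f hf.1,
    H.not_weakPiPoint_meetFew hreg hf.1 fun _ hα => hf.mem_meetFew hreg hα,
    hf.cof_meetFew_le hreg hlt.le, hf.cofBar_meetFew_le hreg hlt.le⟩

/-- If `H` is an ideal on `P_κ(λ)` with `a_H = κ`, then there is an ideal `K`
on `P_κ(λ)` that is not a weak `π`-point, with `cof(K) ≤ cof(H)` and `cof̄(K) ≤ cof̄(H)`. -/
theorem exists_not_weakPiPoint (κ lam : Cardinal.{0}) (hreg : κ.IsRegular) (huc : ℵ₀ < κ)
    (hlt : κ < lam) (H : IdealP κ lam) (ha : aNum H = κ) :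
    ∃ K : IdealP κ lam, ¬ WeakPiPoint K ∧ K.cof ≤ H.cof ∧ K.cofBar ≤ H.cofBar :=
  exists_not_weakPiPoint_general κ lam hreg hlt H ha

end PaperFormal
end

section
/- Suppose that for every A ∈ I_{κ,λ}⁺ with A ⊆ {a ∈ P_κ(λ) : ∪(a∩κ) ∈ a} there is B ∈ I_{κ,λ}⁺ ∩ P(A) such that ∪(a∩κ) ∈ b for all a, b ∈ B with ∪(a∩κ) < ∪(b∩κ). Then for every σ ∈ K(κ,λ), every ideal J on κ with cof̄(J) ≤ σ is weakly selective (that is, σ < non̄_κ(weakly selective) for every σ ∈ K(κ,λ)). -/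
open Cardinal Set

/-!
Fix `T` witnessing `σ ∈ K(κ,λ)` and index a `cof̄`-basis of `J` by `T` as `t ↦ cm t`. For
`A ∈ J⁺` and `w : κ → P_κ(λ)`, call `a` adapted if `∪(a∩κ) ∈ A ∩ a`, `a` is closed under `w`
below `∪(a∩κ)`, and `∪(a∩κ) ∈ cm t` implies `∪(a∩κ) ∈ t` for all `t ∈ T ∩ P(a)`. Adapted sets
are cofinal: close a given set `a` under `w`, then add a point of `A` above `∪(a∩κ)` avoiding
`⋃{cm t : t ∈ T ∩ P(a)}`, which lies in `J` because `T ∩ P(a)` is small. The hypothesis yields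
a coherent cofinal family `B` of adapted sets, and `{∪(b∩κ) : b ∈ B} ∈ J⁺`: a cover of it by
`cm t`, `t ∈ s`, is defeated by any `b ∈ B` containing `⋃ s` with `∪(b∩κ)` above `⋃ s`.
Coherence together with closure under `w` gives the weak P-point property (`w` covering the
fibres of `f`) and the weak Q-point property (`w α = {g α + 1}`).
-/

namespace PaperFormal

section

variable {κ lam : Cardinal.{0}}

lemma card_union_lt (hreg : κ.IsRegular) {a b : Set Ordinal.{0}}
    (ha : #a < Cardinal.lift.{1} κ) (hb : #b < Cardinal.lift.{1} κ) :
    #(a ∪ b : Set Ordinal.{0}) < Cardinal.lift.{1} κ :=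
  (mk_union_le a b).trans_lt (add_lt_of_lt hreg.lift.aleph0_le ha hb)

lemma card_singleton_lt (hreg : κ.IsRegular) {X : Type 1} (x : X) :
    #({x} : Set X) < Cardinal.lift.{1} κ := by
  rw [mk_singleton]
  exact one_lt_aleph0.trans_le hreg.lift.aleph0_le

lemma card_Iic_lt (hreg : κ.IsRegular) {δ : Ordinal.{0}} (hδ : δ < κ.ord) :
    #(Iic δ) < Cardinal.lift.{1} κ := by
  rw [← Order.Iio_succ, mk_Iio_ordinal, lift_lt, ← lt_ord]
  exact (isSuccLimit_ord hreg.aleph0_le).succ_lt hδ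

lemma exists_card_eq_leastCard {X : Type 1} {P : Set X → Prop} {F : Set X} {c : Cardinal.{0}}
    (hF : P F) (hc : #F ≤ Cardinal.lift.{1} c) :
    ∃ G, P G ∧ #G = Cardinal.lift.{1} (leastCard P) := by
  obtain ⟨c₀, hc₀⟩ := mem_range_lift_of_le hc
  obtain ⟨G, hG, hGc⟩ :=
    csInf_mem (s := {c | ∃ F, P F ∧ Cardinal.lift.{1} c = #F}) ⟨c₀, F, hF, hc₀⟩
  exact ⟨G, hG, hGc.symm⟩

lemma biUnion_mem_smallSet (hreg : κ.IsRegular) {ι : Type 1} {s : Set ι}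
    {f : ι → Set Ordinal.{0}} (hs : #s < Cardinal.lift.{1} κ)
    (hf : ∀ i ∈ s, f i ∈ smallSet κ lam) : (⋃ i ∈ s, f i) ∈ smallSet κ lam :=
  ⟨iUnion₂_subset fun i hi => (hf i hi).1,
    (card_biUnion_lt_iff_forall_of_isRegular hreg.lift hs).2 fun i hi => (hf i hi).2⟩

lemma sUnion_mem_smallSet (hreg : κ.IsRegular) {X : Set (Set Ordinal.{0})}
    (hX : X ⊆ smallSet κ lam) (hcard : #X < Cardinal.lift.{1} κ) : ⋃₀ X ∈ smallSet κ lam := by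
  rw [sUnion_eq_biUnion]
  exact biUnion_mem_smallSet hreg hcard hX

lemma union_mem_smallSet (hreg : κ.IsRegular) {a b : Set Ordinal.{0}}
    (ha : a ∈ smallSet κ lam) (hb : b ∈ smallSet κ lam) : a ∪ b ∈ smallSet κ lam :=
  ⟨union_subset ha.1 hb.1, card_union_lt hreg ha.2 hb.2⟩

lemma insert_mem_smallSet (hreg : κ.IsRegular) (hlt : κ ≤ lam) {a : Set Ordinal.{0}}
    (ha : a ∈ smallSet κ lam) {α : Ordinal.{0}} (hα : α < κ.ord) :
    insert α a ∈ smallSet κ lam := by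
  refine insert_eq α a ▸ union_mem_smallSet hreg ⟨?_, card_singleton_lt hreg α⟩ ha
  rintro _ rfl
  exact hα.trans_le (ord_le_ord.2 hlt)

lemma mem_plusOf_Ikl_iff {A : Set (Set Ordinal.{0})} :
    A ∈ plusOf κ lam (Ikl κ lam) ↔
      A ⊆ smallSet κ lam ∧ ∀ c ∈ smallSet κ lam, ∃ b ∈ A, c ⊆ b := by
  simp only [plusOf, Ikl, mem_ofPred_eq, not_and, not_exists, not_forall, not_not, exists_prop]
  exact and_congr_right fun hA => ⟨fun h c hc => h hA c hc, fun h _ c hc => h c hc⟩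

lemma le_supK {b : Set Ordinal.{0}} {x : Ordinal.{0}} (hx : x ∈ b) (hxκ : x < κ.ord) :
    x ≤ supK κ b :=
  le_csSup ⟨κ.ord, fun _ hy => hy.2.le⟩ ⟨hx, hxκ⟩

lemma supK_lt_ord (hreg : κ.IsRegular) {a : Set Ordinal.{0}}
    (ha : #a < Cardinal.lift.{1} κ) : supK κ a < κ.ord :=
  Ordinal.sSup_lt_of_lt_cof (by
    rw [← Ordinal.lift_cof, hreg.cof_ord]
    exact (mk_le_mk_of_subset inter_subset_left).trans_lt ha) fun _ hx => hx.2

lemma supK_insert_of_supK_lt {a : Set Ordinal.{0}} {α : Ordinal.{0}} (hα : α < κ.ord)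
    (h : supK κ a < α) : supK κ (insert α a) = α := by
  refine le_antisymm (csSup_le ⟨α, mem_insert α a, hα⟩ ?_) (le_supK (mem_insert α a) hα)
  rintro γ ⟨rfl | hγa, hγκ⟩
  · exact le_rfl
  · exact (le_supK hγa hγκ).trans h.le

lemma exists_superset_closed (hreg : κ.IsRegular) (huc : ℵ₀ < κ)
    {w : Ordinal.{0} → Set Ordinal.{0}} (hw : ∀ γ, w γ ∈ smallSet κ lam)
    {c : Set Ordinal.{0}} (hc : c ∈ smallSet κ lam) :
    ∃ a ∈ smallSet κ lam, c ⊆ a ∧ ∀ γ ∈ a, w γ ⊆ a := by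
  set step : Set Ordinal.{0} → Set Ordinal.{0} := fun s => s ∪ ⋃ γ ∈ s, w γ
  have hstep : ∀ n, step^[n] c ∈ smallSet κ lam := by
    intro n
    induction n with
    | zero => exact hc
    | succ n ih =>
      rw [Function.iterate_succ_apply']
      exact union_mem_smallSet hreg ih (biUnion_mem_smallSet hreg ih.2 fun γ _ => hw γ)
  have hcount : #(range fun n => step^[n] c) < Cardinal.lift.{1} κ := by
    have := mk_range_le_lift (f := fun n => step^[n] c)
    rw [lift_uzero, mk_nat, lift_aleph0] at this
    exact this.trans_lt (aleph0_lt_lift.2 huc)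
  refine ⟨⋃ n, step^[n] c, ?_, subset_iUnion (fun n => step^[n] c) 0, fun γ hγ => ?_⟩
  · rw [← sUnion_range]
    exact sUnion_mem_smallSet hreg (range_subset_iff.2 hstep) hcount
  · obtain ⟨n, hn⟩ := mem_iUnion.1 hγ
    refine Subset.trans ?_ (subset_iUnion _ (n + 1))
    rw [Function.iterate_succ_apply']
    exact subset_union_right.trans' (subset_biUnion_of_mem (u := w) hn)

namespace IdealK

lemma biUnion_mem (J : IdealK κ) {ι : Type 1} {s : Set ι} {f : ι → Set Ordinal.{0}}
    (hs : #s < Cardinal.lift.{1} κ) (hf : ∀ i ∈ s, f i ∈ J.mem) : (⋃ i ∈ s, f i) ∈ J.mem := by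
  rw [← sUnion_image]
  exact J.sUnion_mem _ (image_subset_iff.2 hf) (mk_image_le.trans_lt hs)

lemma mem_of_card_lt (J : IdealK κ) {S : Set Ordinal.{0}} (hS : S ⊆ Iio κ.ord)
    (hcard : #S < Cardinal.lift.{1} κ) : S ∈ J.mem := by
  rw [← biUnion_of_singleton S]
  exact J.biUnion_mem hcard fun γ hγ => J.singleton_mem γ (hS hγ)

lemma union_mem (hreg : κ.IsRegular) (J : IdealK κ) {D E : Set Ordinal.{0}}
    (hD : D ∈ J.mem) (hE : E ∈ J.mem) : D ∪ E ∈ J.mem := by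
  rw [← sUnion_pair]
  refine J.sUnion_mem _ (pair_subset hD hE) ?_
  exact (toFinite {D, E}).lt_aleph0.trans_le hreg.lift.aleph0_le

lemma exists_mem_notMem_gt (hreg : κ.IsRegular) (J : IdealK κ)
    {A : Set Ordinal.{0}} (hA : A ∈ J.plus) {D : Set Ordinal.{0}} (hD : D ∈ J.mem)
    {δ : Ordinal.{0}} (hδ : δ < κ.ord) : ∃ α ∈ A, α ∉ D ∧ δ < α := by
  by_contra! h
  have hIic : Iic δ ∈ J.mem :=
    J.mem_of_card_lt (fun _ hx => lt_of_le_of_lt hx hδ) (card_Iic_lt hreg hδ)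
  refine hA.2 (J.subset_mem _ (J.union_mem hreg hD hIic) _ fun α hα => ?_)
  by_cases hαD : α ∈ D
  · exact Or.inl hαD
  · exact Or.inr (h α hα hαD)

lemma exists_cover_card_eq_cofBar (hreg : κ.IsRegular) (J : IdealK κ) :
    ∃ X : Set (Set Ordinal.{0}),
      (X ⊆ J.mem ∧ ∀ A ∈ J.mem, ∃ x ⊆ X, #x < Cardinal.lift.{1} κ ∧ A ⊆ ⋃₀ x) ∧
        #X = Cardinal.lift.{1} J.cofBar := by
  have hcover : J.mem ⊆ J.mem ∧
      ∀ A ∈ J.mem, ∃ x ⊆ J.mem, #x < Cardinal.lift.{1} κ ∧ A ⊆ ⋃₀ x :=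
    ⟨subset_rfl, fun A hA => ⟨{A}, singleton_subset_iff.2 hA,
      card_singleton_lt hreg A, by rw [sUnion_singleton]⟩⟩
  have hcard : #J.mem ≤ Cardinal.lift.{1} (2 ^ κ) :=
    calc #J.mem ≤ #(𝒫 Iio κ.ord) := mk_le_mk_of_subset J.subset_iio
      _ = Cardinal.lift.{1} (2 ^ κ) := by
        rw [mk_powerset, mk_Iio_ordinal, card_ord, lift_two_power]
  exact exists_card_eq_leastCard hcover hcard

def IsCoverIndexedBy (J : IdealK κ) (T : Set (Set Ordinal.{0}))
    (cm : Set Ordinal.{0} → Set Ordinal.{0}) : Prop :=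
  (∀ t ∈ T, cm t ∈ J.mem) ∧
    ∀ A ∈ J.mem, ∃ s ⊆ T, #s < Cardinal.lift.{1} κ ∧ A ⊆ ⋃ t ∈ s, cm t

lemma exists_isCoverIndexedBy (hreg : κ.IsRegular) (J : IdealK κ)
    {T : Set (Set Ordinal.{0})} (hT : Cardinal.lift.{1} J.cofBar ≤ #T) :
    ∃ cm, J.IsCoverIndexedBy T cm := by
  classical
  obtain ⟨X, ⟨hXJ, hXcov⟩, hX⟩ := J.exists_cover_card_eq_cofBar hreg
  obtain ⟨e⟩ := (le_def X T).1 (hX.trans_le hT)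
  set f : X → Set Ordinal.{0} := fun x => e x
  have hf : Function.Injective f := Subtype.val_injective.comp e.injective
  refine ⟨Function.extend f Subtype.val fun _ => ∅, fun t _ => ?_, fun A hA => ?_⟩
  · rw [Function.extend_def]
    split_ifs with h
    · exact hXJ (Classical.choose h).2
    · exact J.mem_of_card_lt (empty_subset _) (by simp [hreg.pos])
  · obtain ⟨x, hxX, hxcard, hAx⟩ := hXcov A hA
    refine ⟨range fun y : x => f ⟨y, hxX y.2⟩, range_subset_iff.2 fun y => (e _).2,
      mk_range_le.trans_lt hxcard, fun α hα => ?_⟩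
    obtain ⟨C, hCx, hαC⟩ := hAx hα
    refine mem_iUnion₂.2 ⟨_, ⟨⟨C, hCx⟩, rfl⟩, ?_⟩
    rwa [hf.extend_apply]

end IdealK

def IsSupKCoherent (κ : Cardinal.{0}) (B : Set (Set Ordinal.{0})) : Prop :=
  ∀ a ∈ B, ∀ b ∈ B, supK κ a < supK κ b → supK κ a ∈ b

def HasCoherentRefinements (κ lam : Cardinal.{0}) : Prop :=
  ∀ A ∈ plusOf κ lam (Ikl κ lam), A ⊆ {a ∈ smallSet κ lam | supK κ a ∈ a} →
    ∃ B ∈ plusOf κ lam (Ikl κ lam), B ⊆ A ∧ IsSupKCoherent κ B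

structure IsAdapted (κ lam : Cardinal.{0}) (T : Set (Set Ordinal.{0}))
    (cm : Set Ordinal.{0} → Set Ordinal.{0}) (A : Set Ordinal.{0})
    (w : Ordinal.{0} → Set Ordinal.{0}) (a : Set Ordinal.{0}) : Prop where
  mem_smallSet : a ∈ smallSet κ lam
  supK_mem : supK κ a ∈ a
  supK_mem_target : supK κ a ∈ A
  supK_mem_of_mem_cm : ∀ t ∈ T, t ⊆ a → supK κ a ∈ cm t → supK κ a ∈ t
  closed : ∀ γ ∈ a, γ < supK κ a → w γ ⊆ a

variable {T : Set (Set Ordinal.{0})} {cm : Set Ordinal.{0} → Set Ordinal.{0}}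
  {J : IdealK κ} {A : Set Ordinal.{0}} {w : Ordinal.{0} → Set Ordinal.{0}}

lemma exists_isAdapted_superset (hreg : κ.IsRegular) (huc : ℵ₀ < κ) (hlt : κ ≤ lam)
    (hTK : ∀ a ∈ smallSet κ lam, #{t ∈ T | t ⊆ a} < Cardinal.lift.{1} κ)
    (hcm : ∀ t ∈ T, cm t ∈ J.mem) (hA : A ∈ J.plus) (hw : ∀ γ, w γ ∈ smallSet κ lam)
    {c : Set Ordinal.{0}} (hc : c ∈ smallSet κ lam) :
    ∃ a, IsAdapted κ lam T cm A w a ∧ c ⊆ a := by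
  obtain ⟨a, ha, hca, hclosed⟩ := exists_superset_closed hreg huc hw hc
  have hD : (⋃ t ∈ {t ∈ T | t ⊆ a}, cm t) ∈ J.mem :=
    J.biUnion_mem (hTK a ha) fun t ht => hcm t ht.1
  obtain ⟨α, hαA, hαD, hsupα⟩ := J.exists_mem_notMem_gt hreg hA hD (supK_lt_ord hreg ha.2)
  have hsup : supK κ (insert α a) = α := supK_insert_of_supK_lt (hA.1 hαA) hsupα
  refine ⟨insert α a, ⟨insert_mem_smallSet hreg hlt ha (hA.1 hαA), ?_, ?_, ?_, ?_⟩,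
    hca.trans (subset_insert α a)⟩
  · rw [hsup]
    exact mem_insert α a
  · rwa [hsup]
  · rw [hsup]
    intro t ht hta hαt
    by_contra hαt'
    exact hαD (mem_biUnion ⟨ht, (subset_insert_iff_of_notMem hαt').1 hta⟩ hαt)
  · rw [hsup]
    rintro γ (rfl | hγ) hγα
    · exact (lt_irrefl γ hγα).elim
    · exact (hclosed γ hγ).trans (subset_insert α a)

lemma image_supK_subset {B : Set (Set Ordinal.{0})}
    (hBA : ∀ b ∈ B, IsAdapted κ lam T cm A w b) : supK κ '' B ⊆ A :=
  image_subset_iff.2 fun b hb => (hBA b hb).supK_mem_target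

lemma image_supK_mem_plus (hreg : κ.IsRegular) (hlt : κ ≤ lam) (hT : T ⊆ smallSet κ lam)
    (hcov : J.IsCoverIndexedBy T cm) (hA : A ∈ J.plus) {B : Set (Set Ordinal.{0})}
    (hB : B ∈ plusOf κ lam (Ikl κ lam)) (hBA : ∀ b ∈ B, IsAdapted κ lam T cm A w b) :
    supK κ '' B ∈ J.plus := by
  refine ⟨(image_supK_subset hBA).trans fun _ hα => hA.1 hα, fun hBJ => ?_⟩
  obtain ⟨s, hsT, hscard, hscov⟩ := hcov.2 _ hBJ
  have hu : ⋃₀ s ∈ smallSet κ lam := sUnion_mem_smallSet hreg (hsT.trans hT) hscard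
  set δ := Order.succ (supK κ (⋃₀ s))
  have hδ : δ < κ.ord := (isSuccLimit_ord hreg.aleph0_le).succ_lt (supK_lt_ord hreg hu.2)
  obtain ⟨b, hbB, hδb⟩ := (mem_plusOf_Ikl_iff.1 hB).2 _ (insert_mem_smallSet hreg hlt hu hδ)
  have hb := hBA b hbB
  obtain ⟨t, hts, hbt⟩ := mem_iUnion₂.1 (hscov ⟨b, hbB, rfl⟩)
  have htb : t ⊆ b := (subset_sUnion_of_mem hts).trans ((subset_insert δ _).trans hδb)
  have hb_le : supK κ b ≤ supK κ (⋃₀ s) :=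
    le_supK ⟨t, hts, hb.supK_mem_of_mem_cm t (hsT hts) htb hbt⟩ (hA.1 hb.supK_mem_target)
  have hδ_le : δ ≤ supK κ b := le_supK (hδb (mem_insert δ _)) hδ
  exact (Order.lt_succ (supK κ (⋃₀ s))).not_ge (hδ_le.trans hb_le)

lemma exists_isSupKCoherent_image_mem_plus (hreg : κ.IsRegular) (huc : ℵ₀ < κ) (hlt : κ ≤ lam)
    (hyp : HasCoherentRefinements κ lam) (hT : T ⊆ smallSet κ lam)
    (hTK : ∀ a ∈ smallSet κ lam, #{t ∈ T | t ⊆ a} < Cardinal.lift.{1} κ)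
    (hcov : J.IsCoverIndexedBy T cm) (hA : A ∈ J.plus) (hw : ∀ γ, w γ ∈ smallSet κ lam) :
    ∃ B, (∀ b ∈ B, IsAdapted κ lam T cm A w b) ∧ supK κ '' B ∈ J.plus ∧
      IsSupKCoherent κ B := by
  have hplus : {a | IsAdapted κ lam T cm A w a} ∈ plusOf κ lam (Ikl κ lam) :=
    mem_plusOf_Ikl_iff.2 ⟨fun a ha => ha.mem_smallSet, fun c hc =>
      exists_isAdapted_superset hreg huc hlt hTK hcov.1 hA hw hc⟩
  obtain ⟨B, hB, hBA, hcoh⟩ := hyp _ hplus fun a ha => ⟨ha.mem_smallSet, ha.supK_mem⟩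
  exact ⟨B, hBA, image_supK_mem_plus hreg hlt hT hcov hA hB hBA, hcoh⟩

lemma weakPPoint_of_isCoverIndexedBy (hreg : κ.IsRegular) (huc : ℵ₀ < κ) (hlt : κ ≤ lam)
    (hyp : HasCoherentRefinements κ lam) (hT : T ⊆ smallSet κ lam)
    (hTK : ∀ a ∈ smallSet κ lam, #{t ∈ T | t ⊆ a} < Cardinal.lift.{1} κ)
    (hcov : J.IsCoverIndexedBy T cm) : WeakPPoint J := by
  intro A hA f _ hfib
  choose s hsT hscard hscov using fun β => hcov.2 _ (hfib β)
  have hw : ∀ γ, ⋃₀ s (f γ) ∈ smallSet κ lam := fun γ =>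
    sUnion_mem_smallSet hreg ((hsT _).trans hT) (hscard _)
  obtain ⟨B, hBA, hBJ, hcoh⟩ :=
    exists_isSupKCoherent_image_mem_plus hreg huc hlt hyp hT hTK hcov hA hw
  refine ⟨supK κ '' B, hBJ, image_supK_subset hBA, fun β => ?_⟩
  rcases eq_empty_or_nonempty {α ∈ supK κ '' B | f α = β} with
    hempty | ⟨_, ⟨a, ha, rfl⟩, hfa⟩
  · rw [hempty]
    simp [hreg.pos]
  -- Every larger member `b` of the fibre contains `supK κ a`, hence `⋃₀ s β`, so adaptedness
  -- puts `supK κ b` into `⋃₀ s β`.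
  have hfibre : {α ∈ supK κ '' B | f α = β} ⊆ ⋃₀ s β ∪ Iic (supK κ a) := by
    rintro _ ⟨⟨b, hb, rfl⟩, hfb⟩
    rcases le_or_gt (supK κ b) (supK κ a) with hle | hgt
    · exact Or.inr hle
    have hsb : ⋃₀ s β ⊆ b := hfa ▸ (hBA b hb).closed _ (hcoh a ha b hb hgt) hgt
    obtain ⟨t, hts, hbt⟩ := mem_iUnion₂.1 (hscov β ⟨(hBA b hb).supK_mem_target, hfb⟩)
    exact Or.inl ⟨t, hts, (hBA b hb).supK_mem_of_mem_cm t (hsT β hts)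
      ((subset_sUnion_of_mem hts).trans hsb) hbt⟩
  refine (mk_le_mk_of_subset hfibre).trans_lt (card_union_lt hreg ?_ ?_)
  · exact (sUnion_mem_smallSet hreg ((hsT β).trans hT) (hscard β)).2
  · exact card_Iic_lt hreg (hA.1 (image_supK_subset hBA ⟨a, ha, rfl⟩))

lemma weakQPoint_of_isCoverIndexedBy (hreg : κ.IsRegular) (huc : ℵ₀ < κ) (hlt : κ ≤ lam)
    (hyp : HasCoherentRefinements κ lam) (hT : T ⊆ smallSet κ lam)
    (hTK : ∀ a ∈ smallSet κ lam, #{t ∈ T | t ⊆ a} < Cardinal.lift.{1} κ)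
    (hcov : J.IsCoverIndexedBy T cm) : WeakQPoint J := by
  intro A hA g hg
  have hw : ∀ γ, {Order.succ (g γ)} ∩ Iio κ.ord ∈ smallSet κ lam := fun γ =>
    ⟨fun _ hx => hx.2.trans_le (ord_le_ord.2 hlt),
      (mk_le_mk_of_subset inter_subset_left).trans_lt (card_singleton_lt hreg _)⟩
  obtain ⟨B, hBA, hBJ, hcoh⟩ :=
    exists_isSupKCoherent_image_mem_plus hreg huc hlt hyp hT hTK hcov hA hw
  refine ⟨supK κ '' B, hBJ, image_supK_subset hBA, ?_⟩
  rintro _ ⟨a, ha, rfl⟩ _ ⟨b, hb, rfl⟩ hab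
  have hsucc : Order.succ (g (supK κ a)) < κ.ord :=
    (isSuccLimit_ord hreg.aleph0_le).succ_lt (hg _ (hA.1 (hBA a ha).supK_mem_target))
  have hmem : Order.succ (g (supK κ a)) ∈ b :=
    (hBA b hb).closed _ (hcoh a ha b hb hab) hab ⟨rfl, hsucc⟩
  exact (Order.lt_succ _).trans_le (le_supK hmem hsucc)

end

/-- Suppose that for every `A ∈ I_{κ,λ}⁺` with
`A ⊆ {a ∈ P_κ(λ) : ∪(a∩κ) ∈ a}` there is `B ∈ I_{κ,λ}⁺ ∩ P(A)` with `∪(a∩κ) ∈ b` whenever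
`a, b ∈ B` and `∪(a∩κ) < ∪(b∩κ)`. Then for every `σ ∈ K(κ,λ)`, every ideal `J` on `κ` with
`cof̄(J) ≤ σ` is weakly selective. -/
theorem weaklySelective_of_small_cofBar (κ lam : Cardinal.{0}) (hreg : κ.IsRegular)
    (huc : ℵ₀ < κ) (hlt : κ < lam)
    (hyp : ∀ A ∈ plusOf κ lam (Ikl κ lam),
      A ⊆ {a ∈ smallSet κ lam | supK κ a ∈ a} →
      ∃ B ∈ plusOf κ lam (Ikl κ lam), B ⊆ A ∧
        ∀ a ∈ B, ∀ b ∈ B, supK κ a < supK κ b → supK κ a ∈ b) :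
    ∀ σ ∈ Kset κ lam, ∀ J : IdealK κ, J.cofBar ≤ σ → WeaklySelective J := by
  rintro σ ⟨-, T, hT, hTσ, hTK⟩ J hJ
  obtain ⟨cm, hcov⟩ := J.exists_isCoverIndexedBy hreg (hTσ ▸ lift_le.2 hJ)
  exact ⟨weakPPoint_of_isCoverIndexedBy hreg huc hlt.le hyp hT hTK hcov,
    weakQPoint_of_isCoverIndexedBy hreg huc hlt.le hyp hT hTK hcov⟩

end PaperFormal
end
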